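/- Let Ω ⊆ ℝⁿ be an open set, f : ℝ → ℝ continuous, and q ∈ (0,1). Let v : Ω → ℝ be continuous with v > 0 in Ω, and suppose v is a viscosity supersolution of min{|∇w| − f(w), −Δ_∞ w} = 0 in Ω. Then the function ṽ := v^{1−q} is a viscosity supersolution of min{ |∇w̃| − (1−q) f(w̃^{1/(1−q)}) / w̃^{q/(1−q)}, −Δ_∞ w̃ − (q/(1−q)) |∇w̃|⁴ / w̃ } = 0 in every open set U whose closure is compact and contained in Ω. -/

import Mathlib

open Real Set Metric Filter Topology

/-- `⟨D²φ(x)∇φ(x), ∇φ(x)⟩`, i.e. `Δ_∞φ(x)`. -/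
noncomputable def hessQ {n : ℕ} (φ : EuclideanSpace ℝ (Fin n) → ℝ)
    (x : EuclideanSpace ℝ (Fin n)) : ℝ :=
  iteratedFDeriv ℝ 2 φ x ![gradient φ x, gradient φ x]

/-- Viscosity supersolution of `min{|∇w| − f(w), −Δ_∞ w} = 0` in `Ω`. -/
def IsFSuper {n : ℕ} (Ω : Set (EuclideanSpace ℝ (Fin n))) (f : ℝ → ℝ)
    (w : EuclideanSpace ℝ (Fin n) → ℝ) : Prop :=
  ∀ x₀ ∈ Ω, ∀ φ : EuclideanSpace ℝ (Fin n) → ℝ, ContDiff ℝ 2 φ →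
    IsLocalMinOn (fun x => w x - φ x) Ω x₀ →
    (0 ≤ ‖gradient φ x₀‖ - f (w x₀) ∧ 0 ≤ -(hessQ φ x₀))

/-- Viscosity subsolution of `min{|∇w| − f(w), −Δ_∞ w} = 0` in `Ω`. -/
def IsFSub {n : ℕ} (Ω : Set (EuclideanSpace ℝ (Fin n))) (f : ℝ → ℝ)
    (w : EuclideanSpace ℝ (Fin n) → ℝ) : Prop :=
  ∀ x₀ ∈ Ω, ∀ φ : EuclideanSpace ℝ (Fin n) → ℝ, ContDiff ℝ 2 φ →
    IsLocalMaxOn (fun x => w x - φ x) Ω x₀ →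
    min (‖gradient φ x₀‖ - f (w x₀)) (-(hessQ φ x₀)) ≤ 0

/-- Viscosity supersolution of the transformed equation
`min{ |∇w̃| − (1−q) f(w̃^{1/(1−q)})/w̃^{q/(1−q)}, −Δ_∞ w̃ − (q/(1−q))|∇w̃|⁴/w̃ } = 0` in `U`. -/
def IsTransfSuper {n : ℕ} (U : Set (EuclideanSpace ℝ (Fin n))) (f : ℝ → ℝ) (q : ℝ)
    (w : EuclideanSpace ℝ (Fin n) → ℝ) : Prop :=
  ∀ x₀ ∈ U, ∀ φ : EuclideanSpace ℝ (Fin n) → ℝ, ContDiff ℝ 2 φ →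
    IsLocalMinOn (fun x => w x - φ x) U x₀ →
    (0 ≤ ‖gradient φ x₀‖ - (1 - q) * f (w x₀ ^ (1 / (1 - q))) / w x₀ ^ (q / (1 - q)) ∧
     0 ≤ -(hessQ φ x₀) - (q / (1 - q)) * ‖gradient φ x₀‖ ^ 4 / w x₀)

/-! With `p = 1 / (1 - q)`, a `C²` function `φ` touching `ṽ = v ^ (1 - q)` from below at `x₀`
gives, after a constant shift, the function `(φ + c) ^ p` touching `v = ṽ ^ p` from below at `x₀`;
a bump cutoff makes it a global `C²` test function for `v`. By the chain rule
`∇(φ ^ p) = p φ ^ (p - 1) ∇φ` and `Δ_∞(φ ^ p) = (p φ ^ (p - 1))³ (Δ_∞ φ + (p - 1) |∇φ|⁴ / φ)`,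
so the two inequalities for `v` become those of the transformed equation, as `p - 1 = q / (1 - q)`.
-/

theorem ContDiffAt.exists_contDiff_eventuallyEq {E : Type*} [NormedAddCommGroup E]
    [NormedSpace ℝ E] [HasContDiffBump E] {h : E → ℝ} {x₀ : E} {n : ℕ}
    (hh : ContDiffAt ℝ n h x₀) : ∃ ψ : E → ℝ, ContDiff ℝ n ψ ∧ ψ =ᶠ[𝓝 x₀] h := by
  obtain ⟨r, hr, hball⟩ := Metric.eventually_nhds_iff_ball.1 (hh.eventually (by simp))
  let χ : ContDiffBump x₀ := ⟨r / 4, r / 2, by positivity, by linarith⟩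
  refine ⟨fun x => χ x * h x, contDiff_iff_contDiffAt.2 fun x => ?_, ?_⟩
  · by_cases hx : x ∈ tsupport fun x => χ x * h x
    · have hx' : x ∈ ball x₀ r :=
        closedBall_subset_ball (half_lt_self hr) (χ.tsupport_eq ▸ tsupport_mul_subset_left hx)
      exact χ.contDiff.contDiffAt.mul (hball x hx')
    · exact contDiffAt_const.congr_of_eventuallyEq (notMem_tsupport_iff_eventuallyEq.1 hx)
  · filter_upwards [ball_mem_nhds x₀ (by positivity : 0 < r / 4)] with x hx
    rw [χ.one_of_mem_closedBall (ball_subset_closedBall hx), one_mul]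

section

variable {n : ℕ}

local notation "E" => EuclideanSpace ℝ (Fin n)

theorem hessQ_eq_fderiv_fderiv (φ : E → ℝ) (x : E) :
    hessQ φ x = fderiv ℝ (fderiv ℝ φ) x (gradient φ x) (gradient φ x) := by
  simp [hessQ, iteratedFDeriv_two_apply]

theorem Filter.EventuallyEq.hessQ_eq {φ ψ : E → ℝ} {x : E} (h : φ =ᶠ[𝓝 x] ψ) :
    hessQ φ x = hessQ ψ x := by
  rw [hessQ_eq_fderiv_fderiv, hessQ_eq_fderiv_fderiv, h.gradient_eq, h.fderiv.fderiv_eq]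

theorem gradient_add_const (φ : E → ℝ) (c : ℝ) :
    gradient (fun y => φ y + c) = gradient φ := by
  ext1 x
  simp only [gradient, fderiv_add_const]

theorem hessQ_add_const (φ : E → ℝ) (c : ℝ) :
    hessQ (fun y => φ y + c) = hessQ φ := by
  ext1 x
  have hfderiv : fderiv ℝ (fun y => φ y + c) = fderiv ℝ φ := funext fun _ => fderiv_add_const c
  rw [hessQ_eq_fderiv_fderiv, hessQ_eq_fderiv_fderiv, gradient_add_const, hfderiv]

theorem gradient_comp_of_hasDerivAt {g : ℝ → ℝ} {g' : ℝ} {φ : E → ℝ} {x : E}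
    (hg : HasDerivAt g g' (φ x)) (hφ : DifferentiableAt ℝ φ x) :
    gradient (fun y => g (φ y)) x = g' • gradient φ x := by
  have hfderiv : HasFDerivAt (fun y => g (φ y)) (g' • fderiv ℝ φ x) x :=
    hg.comp_hasFDerivAt x hφ.hasFDerivAt
  rw [gradient, hfderiv.fderiv, map_smul, gradient]

theorem hessQ_comp_of_hasDerivAt {g g' : ℝ → ℝ} {g'' : ℝ} {φ : E → ℝ} {x : E}
    (hφ : ContDiff ℝ 2 φ) (hg : ∀ᶠ t in 𝓝 (φ x), HasDerivAt g (g' t) t)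
    (hg' : HasDerivAt g' g'' (φ x)) :
    hessQ (fun y => g (φ y)) x =
      g' (φ x) ^ 3 * hessQ φ x + g'' * g' (φ x) ^ 2 * ‖gradient φ x‖ ^ 4 := by
  have hφ₁ : Differentiable ℝ φ := hφ.differentiable two_ne_zero
  have hφ₂ : Differentiable ℝ (fderiv ℝ φ) :=
    (hφ.fderiv_right (m := 1) le_rfl).differentiable one_ne_zero
  have hfderiv : fderiv ℝ (fun y => g (φ y)) =ᶠ[𝓝 x] fun y => g' (φ y) • fderiv ℝ φ y :=
    ((hφ.continuous.tendsto x).eventually hg).mono fun y hy =>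
      (hy.comp_hasFDerivAt y (hφ₁ y).hasFDerivAt).fderiv
  have hsecond : HasFDerivAt (fun y => g' (φ y) • fderiv ℝ φ y) _ x :=
    (hg'.comp_hasFDerivAt x (hφ₁ x).hasFDerivAt).smul (hφ₂ x).hasFDerivAt
  rw [hessQ_eq_fderiv_fderiv, hfderiv.fderiv_eq, hsecond.fderiv,
    gradient_comp_of_hasDerivAt hg.self_of_nhds (hφ₁ x), hessQ_eq_fderiv_fderiv]
  simp only [FunLike.coe_add, Pi.add_apply, FunLike.coe_smul,
    Pi.smul_apply, ContinuousLinearMap.smulRight_apply, Function.comp_apply, map_smul,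
    smul_eq_mul, ← inner_gradient_left, real_inner_self_eq_norm_sq]
  ring

theorem gradient_rpow {φ : E → ℝ} {x : E} (hφ : DifferentiableAt ℝ φ x) (hx : 0 < φ x) (p : ℝ) :
    gradient (fun y => φ y ^ p) x = (p * φ x ^ (p - 1)) • gradient φ x :=
  gradient_comp_of_hasDerivAt (Real.hasDerivAt_rpow_const (Or.inl hx.ne')) hφ

theorem hessQ_rpow {φ : E → ℝ} {x : E} (hφ : ContDiff ℝ 2 φ) (hx : 0 < φ x) (p : ℝ) :
    hessQ (fun y => φ y ^ p) x =
      (p * φ x ^ (p - 1)) ^ 3 * (hessQ φ x + (p - 1) * ‖gradient φ x‖ ^ 4 / φ x) := by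
  have hg : ∀ᶠ t in 𝓝 (φ x), HasDerivAt (fun t => t ^ p) (p * t ^ (p - 1)) t :=
    (lt_mem_nhds hx).mono fun t ht => Real.hasDerivAt_rpow_const (Or.inl ht.ne')
  have hg' := (Real.hasDerivAt_rpow_const (p := p - 1) (Or.inl hx.ne')).const_mul p
  rw [hessQ_comp_of_hasDerivAt hφ hg hg', Real.rpow_sub_one hx.ne' (p - 1)]
  field_simp

theorem IsFSuper.of_isLocalMin_sub_rpow {Ω : Set E} {f : ℝ → ℝ} {v : E → ℝ}
    (hv : IsFSuper Ω f v) {x₀ : E} (hx₀ : x₀ ∈ Ω) {φ : E → ℝ} (hφ : ContDiff ℝ 2 φ)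
    (hφx₀ : 0 < φ x₀) {p : ℝ} (hp : 0 < p) (hmin : IsLocalMin (fun x => v x - φ x ^ p) x₀) :
    f (v x₀) ≤ p * φ x₀ ^ (p - 1) * ‖gradient φ x₀‖ ∧
      hessQ φ x₀ + (p - 1) * ‖gradient φ x₀‖ ^ 4 / φ x₀ ≤ 0 := by
  obtain ⟨ψ, hψ, hψφ⟩ :=
    (hφ.contDiffAt.rpow_const_of_ne (p := p) hφx₀.ne').exists_contDiff_eventuallyEq
  have hψmin : IsLocalMinOn (fun x => v x - ψ x) Ω x₀ :=
    (hmin.congr (hψφ.mono fun x hx => by rw [hx])).on Ω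
  obtain ⟨hgrad, hhess⟩ := hv x₀ hx₀ ψ hψ hψmin
  have hc : 0 < p * φ x₀ ^ (p - 1) := mul_pos hp (Real.rpow_pos_of_pos hφx₀ _)
  rw [hψφ.gradient_eq, gradient_rpow (hφ.differentiable two_ne_zero x₀) hφx₀, norm_smul,
    Real.norm_of_nonneg hc.le] at hgrad
  rw [hψφ.hessQ_eq, hessQ_rpow hφ hφx₀] at hhess
  exact ⟨by linarith, nonpos_of_mul_nonpos_right (neg_nonneg.1 hhess) (pow_pos hc 3)⟩

theorem isLocalMin_sub_rpow_of_isLocalMinOn {v φ : E → ℝ} {U : Set E} {x₀ : E} {a : ℝ}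
    (ha : 0 < a) (hU : U ∈ 𝓝 x₀) (hv : ∀ x ∈ U, 0 < v x) (hφ : ContinuousAt φ x₀)
    (hmin : IsLocalMinOn (fun x => v x ^ a - φ x) U x₀) :
    IsLocalMin (fun x => v x - (φ x + (v x₀ ^ a - φ x₀)) ^ (1 / a)) x₀ := by
  have hpow_inv : ∀ x ∈ U, (v x ^ a) ^ (1 / a) = v x := fun x hx => by
    rw [one_div, Real.rpow_rpow_inv (hv x hx).le ha.ne']
  -- monotonicity of `t ↦ t ^ (1 / a)` needs a nonnegative base: `Real.rpow` is junk below `0`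
  have hpos : ∀ᶠ x in 𝓝 x₀, 0 < φ x + (v x₀ ^ a - φ x₀) := by
    refine (hφ.add continuousAt_const).eventually (lt_mem_nhds ?_)
    simpa using Real.rpow_pos_of_pos (hv x₀ (mem_of_mem_nhds hU)) a
  filter_upwards [hmin.isLocalMin hU, hU, hpos] with x hle hxU hx
  have hle' : φ x + (v x₀ ^ a - φ x₀) ≤ v x ^ a := by linarith
  calc v x₀ - (φ x₀ + (v x₀ ^ a - φ x₀)) ^ (1 / a) = 0 := by
        rw [add_sub_cancel, hpow_inv x₀ (mem_of_mem_nhds hU), sub_self]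
    _ ≤ v x - (φ x + (v x₀ ^ a - φ x₀)) ^ (1 / a) := by
        rw [sub_nonneg, ← hpow_inv x hxU]
        exact Real.rpow_le_rpow hx.le hle' (by positivity)

end

theorem change_of_variables_supersolution_general {n : ℕ} (Ω : Set (EuclideanSpace ℝ (Fin n)))
    (f : ℝ → ℝ)
    (q : ℝ) (hq : q ∈ Set.Ioo (0:ℝ) 1)
    (v : EuclideanSpace ℝ (Fin n) → ℝ)
    (hv_pos : ∀ x ∈ Ω, 0 < v x)
    (hv_super : IsFSuper Ω f v) :
    ∀ U : Set (EuclideanSpace ℝ (Fin n)), IsOpen U → IsCompact (closure U) →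
      closure U ⊆ Ω → IsTransfSuper U f q (fun x => v x ^ (1 - q)) := by
  intro U hUo _ hUΩ x₀ hx₀ φ hφ hmin
  have ha : 0 < 1 - q := sub_pos.2 hq.2
  have hx₀Ω : x₀ ∈ Ω := hUΩ (subset_closure hx₀)
  have hvU : ∀ x ∈ U, 0 < v x := fun x hx => hv_pos x (hUΩ (subset_closure hx))
  have hs : 0 < v x₀ ^ (1 - q) := Real.rpow_pos_of_pos (hv_pos x₀ hx₀Ω) _
  obtain ⟨hgrad, hhess⟩ := hv_super.of_isLocalMin_sub_rpow hx₀Ω (hφ.add contDiff_const)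
    (by rwa [add_sub_cancel]) (one_div_pos.2 ha) (isLocalMin_sub_rpow_of_isLocalMinOn ha
      (hUo.mem_nhds hx₀) hvU hφ.continuous.continuousAt hmin)
  simp only [gradient_add_const, hessQ_add_const, add_sub_cancel] at hgrad hhess
  have hpow_inv : (v x₀ ^ (1 - q)) ^ (1 / (1 - q)) = v x₀ := by
    rw [one_div, Real.rpow_rpow_inv (hv_pos x₀ hx₀Ω).le ha.ne']
  have hexp : 1 / (1 - q) - 1 = q / (1 - q) := by field_simp; ring
  beta_reduce
  rw [hpow_inv, ← hexp, sub_nonneg, div_le_iff₀ (Real.rpow_pos_of_pos hs _)]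
  refine ⟨?_, by linarith⟩
  calc (1 - q) * f (v x₀)
      ≤ (1 - q) * (1 / (1 - q) * (v x₀ ^ (1 - q)) ^ (1 / (1 - q) - 1) * ‖gradient φ x₀‖) := by
        gcongr
    _ = ‖gradient φ x₀‖ * (v x₀ ^ (1 - q)) ^ (1 / (1 - q) - 1) := by field_simp

/-- If `v > 0` is a viscosity supersolution of
`min{|∇w| − f(w), −Δ_∞ w} = 0` in `Ω`, then `ṽ = v^{1−q}` is a viscosity
supersolution of the transformed equation in every open `U` compactly contained
in `Ω`. -/
theorem change_of_variables_supersolution {n : ℕ} (Ω : Set (EuclideanSpace ℝ (Fin n)))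
    (hΩo : IsOpen Ω) (f : ℝ → ℝ) (hf : Continuous f)
    (q : ℝ) (hq : q ∈ Set.Ioo (0:ℝ) 1)
    (v : EuclideanSpace ℝ (Fin n) → ℝ)
    (hv_cont : ContinuousOn v Ω) (hv_pos : ∀ x ∈ Ω, 0 < v x)
    (hv_super : IsFSuper Ω f v) :
    ∀ U : Set (EuclideanSpace ℝ (Fin n)), IsOpen U → IsCompact (closure U) →
      closure U ⊆ Ω → IsTransfSuper U f q (fun x => v x ^ (1 - q)) :=
  change_of_variables_supersolution_general Ω f q hq v hv_pos hv_super
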